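/- The function L(s_a) = t_a ln(t_a/s_a) + (1-t_a) ln((1-t_a)/(1-s_a)) - ln(s_a), defined for s_a ∈ (0,1) with fixed t_a ∈ (0,1) (combined binary KL-plus-CE loss with correct label a), is minimized at the unique point s_a* ∈ (0,1) satisfying the first-order condition, and this minimizer satisfies s_a* > t_a; in particular the minimizer lies strictly between t_a and 1. -/

import Mathlib

noncomputable def L (t s : ℝ) : ℝ :=
  t * Real.log (t / s) + (1 - t) * Real.log ((1 - t) / (1 - s)) - Real.log s

/-! Up to a constant, `L t s = -2 (p log s + (1 - p) log (1 - s))` with `p = (1 + t) / 2`, so by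
Gibbs' inequality for two-point distributions it is minimized at `s = p`, which lies strictly between
`t` and `1`. The derivative `(2 s - 1 - t) / (s (1 - s))` vanishes only at `p`. -/

open Real

lemma L_eq {t s : ℝ} (ht0 : t ≠ 0) (ht1 : t ≠ 1) (hs0 : s ≠ 0) (hs1 : s ≠ 1) :
    L t s = t * log t + (1 - t) * log (1 - t) - ((1 + t) * log s + (1 - t) * log (1 - s)) := by
  rw [L, log_div ht0 hs0, log_div (sub_ne_zero.2 ht1.symm) (sub_ne_zero.2 hs1.symm)]
  ring

lemma hasDerivAt_L {t s : ℝ} (ht0 : t ≠ 0) (ht1 : t ≠ 1) (hs0 : s ≠ 0) (hs1 : s ≠ 1) :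
    HasDerivAt (L t) ((2 * s - 1 - t) / (s * (1 - s))) s := by
  have h1s : 1 - s ≠ 0 := sub_ne_zero.2 hs1.symm
  have hlog1 : HasDerivAt (fun y ↦ log (1 - y)) (-1 / (1 - s)) s := by
    simpa using ((hasDerivAt_id s).const_sub 1).log h1s
  have hform : HasDerivAt
      (fun y ↦ t * log t + (1 - t) * log (1 - t) - ((1 + t) * log y + (1 - t) * log (1 - y)))
      (-((1 + t) * s⁻¹ + (1 - t) * (-1 / (1 - s)))) s :=
    (((hasDerivAt_log hs0).const_mul (1 + t)).add (hlog1.const_mul (1 - t))).const_sub _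
  have heq : L t =ᶠ[nhds s]
      fun y ↦ t * log t + (1 - t) * log (1 - t) - ((1 + t) * log y + (1 - t) * log (1 - y)) := by
    filter_upwards [eventually_ne_nhds hs0, eventually_ne_nhds hs1] with y hy0 hy1
      using L_eq ht0 ht1 hy0 hy1
  refine (hform.congr_of_eventuallyEq heq).congr_deriv ?_
  field_simp
  ring

lemma mul_log_div_le_sub {x s : ℝ} (hx : 0 < x) (hs : 0 < s) : x * log (s / x) ≤ s - x :=
  calc x * log (s / x) ≤ x * (s / x - 1) :=
        mul_le_mul_of_nonneg_left (log_le_sub_one_of_pos (div_pos hs hx)) hx.le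
    _ = s - x := by field_simp

lemma mul_log_add_mul_log_one_sub_le {p s : ℝ} (hp : p ∈ Set.Ioo (0 : ℝ) 1)
    (hs : s ∈ Set.Ioo (0 : ℝ) 1) :
    p * log s + (1 - p) * log (1 - s) ≤ p * log p + (1 - p) * log (1 - p) := by
  obtain ⟨hp0, hp1⟩ := hp
  obtain ⟨hs0, hs1⟩ := hs
  have h₁ := mul_log_div_le_sub hp0 hs0
  have h₂ := mul_log_div_le_sub (sub_pos.2 hp1) (sub_pos.2 hs1)
  rw [log_div hs0.ne' hp0.ne'] at h₁
  rw [log_div (sub_pos.2 hs1).ne' (sub_pos.2 hp1).ne'] at h₂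
  linarith

lemma L_midpoint_le {t s : ℝ} (ht : t ∈ Set.Ioo (0 : ℝ) 1) (hs : s ∈ Set.Ioo (0 : ℝ) 1) :
    L t ((1 + t) / 2) ≤ L t s := by
  obtain ⟨ht0, ht1⟩ := ht
  have hp : (1 + t) / 2 ∈ Set.Ioo (0 : ℝ) 1 := ⟨by linarith, by linarith⟩
  have hgibbs := mul_log_add_mul_log_one_sub_le hp hs
  rw [L_eq ht0.ne' ht1.ne hp.1.ne' hp.2.ne, L_eq ht0.ne' ht1.ne hs.1.ne' hs.2.ne]
  rw [show 1 - (1 + t) / 2 = (1 - t) / 2 by ring] at hgibbs ⊢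
  linarith

theorem binary_loss_min (t : ℝ) (ht : t ∈ Set.Ioo (0:ℝ) 1) :
    ∃! x : ℝ, x ∈ Set.Ioo (0:ℝ) 1 ∧ deriv (L t) x = 0 ∧
      (∀ s ∈ Set.Ioo (0:ℝ) 1, L t x ≤ L t s) ∧ t < x ∧ x < 1 := by
  obtain ⟨ht0, ht1⟩ := ht
  have hderiv {s : ℝ} (hs : s ∈ Set.Ioo (0 : ℝ) 1) :
      deriv (L t) s = (2 * s - 1 - t) / (s * (1 - s)) :=
    (hasDerivAt_L ht0.ne' ht1.ne hs.1.ne' hs.2.ne).deriv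
  have hx : (1 + t) / 2 ∈ Set.Ioo (0 : ℝ) 1 := ⟨by linarith, by linarith⟩
  refine ⟨(1 + t) / 2, ⟨hx, ?_, fun s hs ↦ L_midpoint_le ⟨ht0, ht1⟩ hs, by linarith, hx.2⟩, ?_⟩
  · rw [hderiv hx, show 2 * ((1 + t) / 2) - 1 - t = 0 by ring, zero_div]
  · rintro y ⟨hy, hdy, -⟩
    have hden : y * (1 - y) ≠ 0 := (mul_pos hy.1 (sub_pos.2 hy.2)).ne'
    rw [hderiv hy, div_eq_zero_iff, or_iff_left hden] at hdy
    linarith
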